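/- arXiv:2207.04275 — 2 statements merged into one kernel-verified Lean document; each statement's English description precedes it below -/
import Mathlib

section
/- In the lattice Λ₄ (defined in the context), set D001 = 0, D010 = h₁₃ + h₁₄, D011 = f₂ + e₁, D100 = h₃₄ + e₂, D101 = h₁₂ + f₂, D110 = f₁ + h₃₄, D111 = f₂, and L100 = L010 = L110 = f₁ + f₂ + f₃ − e₄, L001 = 2f₂, L101 = f₃ + f₄, L011 = 2f₁ + f₂ − e₃ − e₄, L111 = f₁ + f₃ − e₄. Then L_χ ≠ 0 for each of the seven characters χ, the seven cover relations hold: 2·L100 = D100 + D101 + D110 + D111, 2·L010 = D010 + D011 + D110 + D111, 2·L001 = D001 + D011 + D101 + D111, 2·L110 = D010 + D011 + D100 + D101, 2·L101 = D001 + D011 + D100 + D110, 2·L011 = D001 + D010 + D101 + D110, 2·L111 = D001 + D010 + D100 + D111, and moreover 2·K + (D001 + D010 + D011 + D100 + D101 + D110 + D111) = f₁ + f₂ + h₃₄ = 3l − e₁ − e₂ − e₃ − e₄. (These relations show the data define a ℤ₂³-cover X → Y₄ with 2K_X ≡ g*(f₁ + f₂ + h₃₄), used for the surface with canonical degree 10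 and q = 1.) -/
/-- The Picard lattice of the blow-up of the projective plane at 4 points:
free abelian group with basis `l, e1, ..., e4`. -/
abbrev Lam : Type := Fin 5 → ℤ

namespace DelPezzoCover

def l : Lam := ![1, 0, 0, 0, 0]
def e1 : Lam := ![0, 1, 0, 0, 0]
def e2 : Lam := ![0, 0, 1, 0, 0]
def e3 : Lam := ![0, 0, 0, 1, 0]
def e4 : Lam := ![0, 0, 0, 0, 1]

/-- The canonical class `K = -3l + e1 + ... + e4`. -/
def K : Lam := (-3 : ℤ) • l + e1 + e2 + e3 + e4

def f1 : Lam := l - e1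
def f2 : Lam := l - e2
def f3 : Lam := l - e3
def f4 : Lam := l - e4

def h12 : Lam := l - e1 - e2
def h13 : Lam := l - e1 - e3
def h14 : Lam := l - e1 - e4
def h23 : Lam := l - e2 - e3
def h24 : Lam := l - e2 - e4
def h34 : Lam := l - e3 - e4

def D001 : Lam := 0
def D010 : Lam := h13 + h14
def D011 : Lam := f2 + e1
def D100 : Lam := h34 + e2
def D101 : Lam := h12 + f2
def D110 : Lam := f1 + h34
def D111 : Lam := f2

def L100 : Lam := f1 + f2 + f3 - e4
def L010 : Lam := f1 + f2 + f3 - e4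
def L001 : Lam := (2 : ℤ) • f2
def L110 : Lam := f1 + f2 + f3 - e4
def L101 : Lam := f3 + f4
def L011 : Lam := (2 : ℤ) • f1 + f2 - e3 - e4
def L111 : Lam := f1 + f3 - e4

theorem cover_data_d10_q1 :
    L100 ≠ 0 ∧
    L010 ≠ 0 ∧
    L001 ≠ 0 ∧
    L110 ≠ 0 ∧
    L101 ≠ 0 ∧
    L011 ≠ 0 ∧
    L111 ≠ 0 ∧
    (2 : ℤ) • L100 = D100 + D101 + D110 + D111 ∧
    (2 : ℤ) • L010 = D010 + D011 + D110 + D111 ∧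
    (2 : ℤ) • L001 = D001 + D011 + D101 + D111 ∧
    (2 : ℤ) • L110 = D010 + D011 + D100 + D101 ∧
    (2 : ℤ) • L101 = D001 + D011 + D100 + D110 ∧
    (2 : ℤ) • L011 = D001 + D010 + D101 + D110 ∧
    (2 : ℤ) • L111 = D001 + D010 + D100 + D111 ∧
    (2 : ℤ) • K + (D001 + D010 + D011 + D100 + D101 + D110 + D111) = f1 + f2 + h34 ∧
    f1 + f2 + h34 = (3 : ℤ) • l - e1 - e2 - e3 - e4 := by
  refine ⟨?_, ?_, ?_, ?_, ?_, ?_, ?_, ?_, ?_, ?_, ?_, ?_, ?_, ?_, ?_, ?_⟩ <;>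
    · show _
      decide

end DelPezzoCover
end

section
/- In the lattice Λ₄ with its intersection form (defined in the context), set L100 = L010 = L110 = f₁ + f₂ + f₃ − e₄, L001 = 2f₂, L101 = f₃ + f₄, L011 = 2f₁ + f₂ − e₃ − e₄, L111 = f₁ + f₃ − e₄, and A = f₁ + f₂ + h₃₄ = 3l − e₁ − e₂ − e₃ − e₄. Then 2·(A·A) = 10, K + L100 = K + L010 = K + L110 = 0, and the sum over the seven characters Σ_χ L_χ·(L_χ + K) = −10 (so that the ℤ₂³-cover X → Y₄ with this building data satisfies K_X² = 10, p_g(X) = 3 and χ(O_X) = 8 + ½·(−10) = 3, hence q(X) = 1). -/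
namespace DelPezzoCover

/-- The intersection form: `l·l = 1`, `eᵢ·eᵢ = -1`, distinct basis vectors orthogonal. -/
def ip (x y : Lam) : ℤ := x 0 * y 0 - (x 1 * y 1 + x 2 * y 2 + x 3 * y 3 + x 4 * y 4)

def A : Lam := f1 + f2 + h34

theorem invariants_d10_q1 :
    A = (3 : ℤ) • l - e1 - e2 - e3 - e4 ∧
    2 * ip A A = 10 ∧
    K + L100 = 0 ∧
    K + L010 = 0 ∧
    K + L110 = 0 ∧
    ip L100 (L100 + K) + ip L010 (L010 + K) + ip L001 (L001 + K) + ip L110 (L110 + K) + ip L101 (L101 + K) + ip L011 (L011 + K) + ip L111 (L111 + K) = -10 := by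
  refine ⟨?_,?_,?_,?_,?_,?_⟩ <;> first
    | (funext i; fin_cases i <;> simp [A,f1,f2,f3,f4,h34,l,e1,e2,e3,e4,K,L100,L010,L110])
    | decide
    | simp [ip,A,f1,f2,f3,f4,h34,l,e1,e2,e3,e4,K,L100,L010,L001,L110,L101,L011,L111]

end DelPezzoCover
end
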